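/- Let G be a locally compact abelian topological group with a Haar measure μ and let f ∈ L¹(G, μ). Then the map φ ↦ ∫_G f(x)·φ(x) dμ(x), defined on COS(G) regarded as a subspace of C(G, ℂ) with the compact-open topology (the topology of uniform convergence on compact sets), is continuous. (Consequently the bijection β_G from the structure space Δ(L¹(G), ⋆_c) with the weak-* topology onto (COS(G), τ_ucc) is an open map.) -/

import Mathlib

open MeasureTheory

/-- The cosine class `COS(G)`: nonzero bounded continuous `φ : G → ℂ` satisfying the
d'Alembert equation `φ(x) φ(y) = (φ(x+y) + φ(x-y))/2`. -/
def CosClass (G : Type*) [AddCommGroup G] [TopologicalSpace G] : Set (G → ℂ) :=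
  {φ | Continuous φ ∧ (∃ C, ∀ x, ‖φ x‖ ≤ C) ∧ φ ≠ 0 ∧
    ∀ x y, φ x * φ y = (φ (x + y) + φ (x - y)) / 2}

/-!
Every `φ ∈ COS(G)` is bounded by `1`: the equation gives `φ 0 = 1` and
`‖φ x‖² ≤ (‖φ (2x)‖ + 1) / 2`, so `M = sup ‖φ‖` satisfies `M² ≤ (M + 1) / 2`, i.e. `M ≤ 1`.
Continuity then holds on any uniformly bounded family of continuous functions: an integrable `f`
carries all but `η` of its `L¹` mass on a compact set `K` (regularity of `μ`), and on `K`
convergence in the compact-open topology is uniform.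
-/

open Filter Topology Set
open scoped ENNReal NNReal

section DAlembert

variable {G 𝕜 : Type*} [AddGroup G] [RCLike 𝕜] {φ : G → 𝕜}

theorem map_zero_eq_one_of_dAlembert (hne : φ ≠ 0)
    (hd : ∀ x y, φ x * φ y = (φ (x + y) + φ (x - y)) / 2) : φ 0 = 1 := by
  obtain ⟨x₀, hx₀⟩ : ∃ x, φ x ≠ 0 := by simpa [funext_iff] using hne
  refine mul_left_cancel₀ hx₀ ?_
  rw [hd x₀ 0, add_zero, sub_zero, mul_one, add_self_div_two]

theorem norm_sq_le_of_dAlembert (hd : ∀ x y, φ x * φ y = (φ (x + y) + φ (x - y)) / 2)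
    (h0 : φ 0 = 1) (x : G) : ‖φ x‖ ^ 2 ≤ (‖φ (x + x)‖ + 1) / 2 := by
  calc ‖φ x‖ ^ 2 = ‖(φ (x + x) + 1) / 2‖ := by rw [sq, ← norm_mul, hd, sub_self, h0]
    _ ≤ (‖φ (x + x)‖ + 1) / 2 := by
      rw [norm_div, RCLike.norm_ofNat]
      gcongr
      exact (norm_add_le _ _).trans_eq (by rw [norm_one])

theorem norm_le_one_of_dAlembert (hb : ∃ C, ∀ x, ‖φ x‖ ≤ C) (hne : φ ≠ 0)
    (hd : ∀ x y, φ x * φ y = (φ (x + y) + φ (x - y)) / 2) (x : G) : ‖φ x‖ ≤ 1 := by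
  obtain ⟨C, hC⟩ := hb
  have hbdd : BddAbove (range fun x => ‖φ x‖) := ⟨C, forall_mem_range.2 hC⟩
  set M := ⨆ x, ‖φ x‖
  have hle (x : G) : ‖φ x‖ ≤ M := le_ciSup hbdd x
  have hM : 0 ≤ M := (norm_nonneg _).trans (hle 0)
  have hsq (x : G) : ‖φ x‖ ^ 2 ≤ (M + 1) / 2 :=
    (norm_sq_le_of_dAlembert hd (map_zero_eq_one_of_dAlembert hne hd) x).trans
      (by linarith [hle (x + x)])
  have hMsq : M ^ 2 ≤ (M + 1) / 2 :=
    (Real.le_sqrt hM (by positivity)).mp <|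
      ciSup_le fun x => (Real.le_sqrt (norm_nonneg _) (by positivity)).mpr (hsq x)
  nlinarith [hle x]

end DAlembert

theorem CosClass.norm_le_one {G : Type*} [AddCommGroup G] [TopologicalSpace G] {φ : G → ℂ}
    (hφ : φ ∈ CosClass G) (x : G) : ‖φ x‖ ≤ 1 :=
  norm_le_one_of_dAlembert hφ.2.1 hφ.2.2.1 hφ.2.2.2 x

section Tightness

variable {X : Type*} [TopologicalSpace X] [MeasurableSpace X] [T2Space X]
  [OpensMeasurableSpace X] {μ : Measure X} [μ.InnerRegularCompactLTTop]

theorem exists_isCompact_setLIntegral_compl_lt {f : X → ℝ≥0∞} (hf : ∫⁻ x, f x ∂μ ≠ ∞)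
    {ε : ℝ≥0∞} (hε : ε ≠ 0) : ∃ K, IsCompact K ∧ ∫⁻ x in Kᶜ, f x ∂μ < ε := by
  obtain ⟨s, hs, hμs, hfs⟩ := exists_setLIntegral_compl_lt hf (ENNReal.half_pos hε).ne'
  obtain ⟨δ, hδ, hfδ⟩ := exists_pos_setLIntegral_lt_of_measure_lt hf (ENNReal.half_pos hε).ne'
  obtain ⟨K, hKs, hK, hμK⟩ := hs.exists_isCompact_sdiff_lt hμs.ne hδ.ne'
  have hcover : Kᶜ ⊆ sᶜ ∪ s \ K := fun x hx => (em (x ∈ s)).elim (fun h => .inr ⟨h, hx⟩) .inl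
  refine ⟨K, hK, ?_⟩
  calc ∫⁻ x in Kᶜ, f x ∂μ ≤ ∫⁻ x in sᶜ ∪ s \ K, f x ∂μ := lintegral_mono_set hcover
    _ ≤ (∫⁻ x in sᶜ, f x ∂μ) + ∫⁻ x in s \ K, f x ∂μ := lintegral_union_le _ _ _
    _ < ε / 2 + ε / 2 := ENNReal.add_lt_add hfs (hfδ _ hμK)
    _ = ε := ENNReal.add_halves ε

theorem MeasureTheory.Integrable.exists_isCompact_integral_norm_compl_lt {E : Type*} [NormedAddCommGroup E]
    {f : X → E} (hf : Integrable f μ) {ε : ℝ} (hε : 0 < ε) :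
    ∃ K, IsCompact K ∧ ∫ x in Kᶜ, ‖f x‖ ∂μ < ε := by
  obtain ⟨K, hK, hKε⟩ :=
    exists_isCompact_setLIntegral_compl_lt hf.2.ne (ENNReal.ofReal_pos.mpr hε).ne'
  refine ⟨K, hK, ?_⟩
  rw [integral_norm_eq_lintegral_enorm hf.1.restrict]
  exact ENNReal.toReal_lt_of_lt_ofReal hKε

end Tightness

section IntegralAgainstBoundedFamily

variable {X 𝕜 : Type*} [MeasurableSpace X] {μ : Measure X} [NormedRing 𝕜] [NormedSpace ℝ 𝕜]

theorem norm_integral_mul_le_of_norm_le {f g : X → 𝕜} (hf : Integrable f μ)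
    (hg : AEStronglyMeasurable g μ) {s : Set X} (hs : MeasurableSet s) {δ B : ℝ}
    (hgs : ∀ x ∈ s, ‖g x‖ ≤ δ) (hgB : ∀ x, ‖g x‖ ≤ B) :
    ‖∫ x, f x * g x ∂μ‖ ≤ δ * ∫ x in s, ‖f x‖ ∂μ + B * ∫ x in sᶜ, ‖f x‖ ∂μ := by
  have hfg : Integrable (fun x => ‖f x‖ * ‖g x‖) μ :=
    hf.norm.mul_bdd hg.norm (ae_of_all _ fun x => by simpa using hgB x)
  calc ‖∫ x, f x * g x ∂μ‖ ≤ ∫ x, ‖f x‖ * ‖g x‖ ∂μ :=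
        norm_integral_le_of_norm_le hfg (ae_of_all _ fun x => norm_mul_le _ _)
    _ = (∫ x in s, ‖f x‖ * ‖g x‖ ∂μ) + ∫ x in sᶜ, ‖f x‖ * ‖g x‖ ∂μ :=
        (integral_add_compl hs hfg).symm
    _ ≤ (∫ x in s, δ * ‖f x‖ ∂μ) + ∫ x in sᶜ, B * ‖f x‖ ∂μ := by
        refine add_le_add ?_ ?_
        · refine setIntegral_mono_on hfg.integrableOn (hf.norm.const_mul δ).integrableOn hs
            fun x hx => ?_
          rw [mul_comm]
          exact mul_le_mul_of_nonneg_right (hgs x hx) (norm_nonneg _)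
        · refine setIntegral_mono_on hfg.integrableOn (hf.norm.const_mul B).integrableOn
            hs.compl fun x _ => ?_
          rw [mul_comm]
          exact mul_le_mul_of_nonneg_right (hgB x) (norm_nonneg _)
    _ = δ * ∫ x in s, ‖f x‖ ∂μ + B * ∫ x in sᶜ, ‖f x‖ ∂μ := by
        rw [integral_const_mul, integral_const_mul]

theorem tendsto_integral_mul_of_tendsto_compactOpen [TopologicalSpace X] [T2Space X]
    [OpensMeasurableSpace X] [μ.InnerRegularCompactLTTop] [SecondCountableTopology 𝕜] {f : X → 𝕜} (hf : Integrable f μ) {ι : Type*} {l : Filter ι}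
    {φ : ι → C(X, 𝕜)} {φ₀ : C(X, 𝕜)} (hφ : Tendsto φ l (𝓝 φ₀)) {C : ℝ≥0}
    (hφC : ∀ᶠ i in l, ∀ x, ‖φ i x‖ ≤ C) (hφ₀C : ∀ x, ‖φ₀ x‖ ≤ C) :
    Tendsto (fun i => ∫ x, f x * φ i x ∂μ) l (𝓝 (∫ x, f x * φ₀ x ∂μ)) := by
  rw [Metric.tendsto_nhds]
  intro ε hε
  obtain ⟨η, hη, hCη⟩ := exists_pos_mul_lt (half_pos hε) (2 * C)
  obtain ⟨δ, hδ, hIδ⟩ := exists_pos_mul_lt (half_pos hε) (∫ x, ‖f x‖ ∂μ)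
  obtain ⟨K, hK, hKη⟩ := hf.exists_isCompact_integral_norm_compl_lt hη
  have hunif := Metric.tendstoUniformlyOn_iff.mp
    (ContinuousMap.tendsto_iff_forall_isCompact_tendstoUniformlyOn.mp hφ K hK) δ hδ
  have hint (ψ : C(X, 𝕜)) (hψ : ∀ x, ‖ψ x‖ ≤ C) : Integrable (fun x => f x * ψ x) μ :=
    hf.mul_bdd ψ.continuous.aestronglyMeasurable (ae_of_all _ hψ)
  filter_upwards [hφC, hunif] with i hiC hiK
  rw [dist_eq_norm, ← integral_sub (hint _ hiC) (hint _ hφ₀C)]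
  simp_rw [← mul_sub]
  have hest := norm_integral_mul_le_of_norm_le (μ := μ) (g := fun x => φ i x - φ₀ x) (B := 2 * C) hf
    ((φ i).continuous.sub φ₀.continuous).aestronglyMeasurable hK.measurableSet
    (fun x hx => by rw [← dist_eq_norm, dist_comm]; exact (hiK x hx).le)
    (fun x => (norm_sub_le _ _).trans (by linarith [hiC x, hφ₀C x]))
  have hKI : ∫ x in K, ‖f x‖ ∂μ ≤ ∫ x, ‖f x‖ ∂μ :=
    setIntegral_le_integral hf.norm (ae_of_all _ fun _ => norm_nonneg _)
  calc _ ≤ δ * ∫ x in K, ‖f x‖ ∂μ + 2 * C * ∫ x in Kᶜ, ‖f x‖ ∂μ := hest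
    _ ≤ (∫ x, ‖f x‖ ∂μ) * δ + 2 * C * η := by rw [mul_comm δ]; gcongr
    _ < ε := by linarith

end IntegralAgainstBoundedFamily

theorem continuous_integral_on_cosClass_general {G : Type*} [AddCommGroup G] [TopologicalSpace G]
    [T2Space G]
    [MeasurableSpace G] [BorelSpace G]
    (μ : Measure G) [μ.Regular]
    (f : G → ℂ) (hf : Integrable f μ) :
    Continuous (fun φ : {ψ : C(G, ℂ) // ⇑ψ ∈ CosClass G} =>
      ∫ x, f x * (φ : C(G, ℂ)) x ∂μ) :=
  continuous_iff_continuousAt.mpr fun φ₀ =>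
    tendsto_integral_mul_of_tendsto_compactOpen hf continuous_subtype_val.continuousAt (C := 1)
      (Eventually.of_forall fun φ => by simpa using CosClass.norm_le_one φ.2)
      (by simpa using CosClass.norm_le_one φ₀.2)

/-- For `f ∈ L¹(G, μ)`, the map `φ ↦ ∫ f(x) φ(x) dμ(x)` is continuous
on `COS(G)` regarded as a subspace of `C(G, ℂ)` with the compact-open topology
(the topology of uniform convergence on compact sets). -/
theorem continuous_integral_on_cosClass {G : Type*} [AddCommGroup G] [TopologicalSpace G]
    [IsTopologicalAddGroup G] [LocallyCompactSpace G] [T2Space G]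
    [MeasurableSpace G] [BorelSpace G]
    (μ : Measure G) [μ.IsAddHaarMeasure] [μ.Regular]
    (f : G → ℂ) (hf : Integrable f μ) :
    Continuous (fun φ : {ψ : C(G, ℂ) // ⇑ψ ∈ CosClass G} =>
      ∫ x, f x * (φ : C(G, ℂ)) x ∂μ) :=
  continuous_integral_on_cosClass_general μ f hf
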